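/- arXiv:1401.0171 — 3 statements merged into one kernel-verified Lean document; each statement's English description precedes it below -/
import Mathlib

section
/- If a 3-partite 3-graph H has a home-base partition (𝓕, 𝓡, W), then τ(H) = 2ν(H). -/
noncomputable section

attribute [local instance] Classical.propDecidable

universe u

variable {α : Type u}

/-- A 3-partite 3-uniform multihypergraph: vertex classes `V1, V2, V3` and a
multiset of edges, each edge being a triple with one vertex in each class
(parallel edges are allowed via multiplicities). -/
structure TriSys (α : Type u) where
  V1 : Finset α
  V2 : Finset α
  V3 : Finset α
  h12 : Disjoint V1 V2
  h13 : Disjoint V1 V3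
  h23 : Disjoint V2 V3
  edges : Multiset (α × α × α)
  mem1 : ∀ e ∈ edges, e.1 ∈ V1
  mem2 : ∀ e ∈ edges, e.2.1 ∈ V2
  mem3 : ∀ e ∈ edges, e.2.2 ∈ V3

/-- The vertex set of an edge. -/
def evset (e : α × α × α) : Finset α := {e.1, e.2.1, e.2.2}

/-- The coordinates of an edge, indexed by `Fin 3`. -/
def ecoord (e : α × α × α) : Fin 3 → α := ![e.1, e.2.1, e.2.2]

namespace TriSys

def verts (H : TriSys α) : Finset α := H.V1 ∪ H.V2 ∪ H.V3

/-- The vertex classes, indexed by `Fin 3`. -/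
def cls (H : TriSys α) : Fin 3 → Finset α := ![H.V1, H.V2, H.V3]

/-- A matching: a set of (pairwise vertex-disjoint) edges. -/
def IsMatching (H : TriSys α) (M : Finset (α × α × α)) : Prop :=
  (∀ e ∈ M, e ∈ H.edges) ∧
  (↑M : Set (α × α × α)).Pairwise fun e f => Disjoint (evset e) (evset f)

/-- The matching number ν. -/
def nu (H : TriSys α) : ℕ :=
  sSup {n : ℕ | ∃ M : Finset (α × α × α), H.IsMatching M ∧ M.card = n}

/-- A vertex cover: a set of vertices meeting every edge. -/
def IsCover (H : TriSys α) (T : Finset α) : Prop :=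
  ∀ e ∈ H.edges, ∃ v ∈ T, v ∈ evset e

/-- The vertex cover number τ. -/
def tau (H : TriSys α) : ℕ :=
  sInf {n : ℕ | ∃ T : Finset α, H.IsCover T ∧ T.card = n}

/-- Deletion of a set of vertices (and all edges meeting it). -/
def delete (H : TriSys α) (S : Finset α) : TriSys α where
  V1 := H.V1 \ S
  V2 := H.V2 \ S
  V3 := H.V3 \ S
  h12 := H.h12.mono Finset.sdiff_subset Finset.sdiff_subset
  h13 := H.h13.mono Finset.sdiff_subset Finset.sdiff_subset
  h23 := H.h23.mono Finset.sdiff_subset Finset.sdiff_subset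
  edges := H.edges.filter fun e => e.1 ∉ S ∧ e.2.1 ∉ S ∧ e.2.2 ∉ S
  mem1 := fun e he => by
    rw [Multiset.mem_filter] at he
    exact Finset.mem_sdiff.mpr ⟨H.mem1 e he.1, he.2.1⟩
  mem2 := fun e he => by
    rw [Multiset.mem_filter] at he
    exact Finset.mem_sdiff.mpr ⟨H.mem2 e he.1, he.2.2.1⟩
  mem3 := fun e he => by
    rw [Multiset.mem_filter] at he
    exact Finset.mem_sdiff.mpr ⟨H.mem3 e he.1, he.2.2.2⟩

end TriSys

/-- The four edges of a truncated Fano plane on vertices `a,b,c,x,y,z`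
(with classes `{a,x} ⊆ V1`, `{b,y} ⊆ V2`, `{c,z} ⊆ V3`). -/
def FanoEdges (a b c x y z : α) : Finset (α × α × α) :=
  {(a, b, c), (a, y, z), (x, b, z), (x, y, c)}

/-- The supports of the edges of `H` induced on a vertex subset `F`. -/
def inducedEdges (H : TriSys α) (F : Finset α) : Finset (α × α × α) :=
  (H.edges.filter fun e => evset e ⊆ F).toFinset

/-- `H` induces a truncated multi-Fano plane on the six-element set `F`. -/
def IsMultiFano (H : TriSys α) (F : Finset α) : Prop :=
  ∃ a b c x y z : α,
    a ∈ H.V1 ∧ x ∈ H.V1 ∧ b ∈ H.V2 ∧ y ∈ H.V2 ∧ c ∈ H.V3 ∧ z ∈ H.V3 ∧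
    a ≠ x ∧ b ≠ y ∧ c ≠ z ∧
    F = {a, b, c, x, y, z} ∧
    inducedEdges H F = FanoEdges a b c x y z

/-- The data of an FR-partition: the families `𝓕` and `𝓡` and the set `W`. -/
structure FRData (α : Type u) where
  Ffam : Finset (Finset α)
  Rfam : Finset (Finset α)
  W : Finset α

/-- The union of the members of a family of sets. -/
def famUnion (G : Finset (Finset α)) : Finset α := G.biUnion id

/-- `(𝓕, 𝓡, W)` is an FR-partition of `H`. -/
def IsFRPartition (H : TriSys α) (P : FRData α) : Prop :=
  (∀ A ∈ P.Ffam, ∀ B ∈ P.Ffam, A ≠ B → Disjoint A B) ∧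
  (∀ A ∈ P.Rfam, ∀ B ∈ P.Rfam, A ≠ B → Disjoint A B) ∧
  (∀ A ∈ P.Ffam, ∀ B ∈ P.Rfam, Disjoint A B) ∧
  (∀ A ∈ P.Ffam, Disjoint A P.W) ∧
  (∀ B ∈ P.Rfam, Disjoint B P.W) ∧
  famUnion P.Ffam ∪ famUnion P.Rfam ∪ P.W = H.verts ∧
  (∀ A ∈ P.Ffam, IsMultiFano H A) ∧
  (∀ B ∈ P.Rfam, ∃ r1 ∈ H.V1, ∃ r2 ∈ H.V2, ∃ r3 ∈ H.V3, B = {r1, r2, r3}) ∧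
  P.Ffam.card + P.Rfam.card = H.nu

/-- `w` is joined to `R` in the auxiliary bipartite graph `B_i`: some edge of
`H` contains `w` and two vertices of `R`. -/
def RAdj (H : TriSys α) (R : Finset α) (w : α) : Prop :=
  ∃ e ∈ H.edges, w ∈ evset e ∧ 2 ≤ (evset e ∩ R).card

/-- The auxiliary bipartite graph on `Rfam` and `Wi` has a matching
saturating `Rfam`. -/
def SaturatingR (H : TriSys α) (Rfam : Finset (Finset α)) (Wi : Finset α) : Prop :=
  ∃ f : Finset α → α, Set.InjOn f ↑Rfam ∧ ∀ R ∈ Rfam, f R ∈ Wi ∧ RAdj H R (f R)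

/-- Matchability of an FR-partition. -/
def IsMatchable (H : TriSys α) (P : FRData α) : Prop :=
  ∀ i : Fin 3, SaturatingR H P.Rfam (P.W ∩ H.cls i)

/-- The edge-home property: every edge is an `F`-edge or an `R`-edge. -/
def EdgeHome (H : TriSys α) (P : FRData α) : Prop :=
  ∀ e ∈ H.edges,
    (∃ A ∈ P.Ffam, evset e ⊆ A) ∨ (∃ B ∈ P.Rfam, 2 ≤ (evset e ∩ B).card)

/-- A home-base partition: a matchable FR-partition with the edge-home
property. -/
def IsHomeBasePartition (H : TriSys α) (P : FRData α) : Prop :=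
  IsFRPartition H P ∧ IsMatchable H P ∧ EdgeHome H P

/-- A home-base hypergraph: one admitting a home-base partition. -/
def IsHomeBase (H : TriSys α) : Prop :=
  ∃ P : FRData α, IsHomeBasePartition H P

/-- The neighborhood of a family `U` of `R`'s in the auxiliary bipartite
graph with `W`-side `Wi`. -/
def RNbhd (H : TriSys α) (Wi : Finset α) (U : Finset (Finset α)) : Finset α :=
  Wi.filter fun w => ∃ R ∈ U, RAdj H R w

/-- `C` is an essential subset of `Wi` in the auxiliary bipartite graph:
`C = N(U)` for some `U ⊆ Rfam` with `|U| = |C|`. -/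
def EssentialSet (H : TriSys α) (Rfam : Finset (Finset α)) (Wi : Finset α)
    (C : Finset α) : Prop :=
  ∃ U ⊆ Rfam, U.card = C.card ∧ RNbhd H Wi U = C

/-- `w` is a superfluous vertex of `Wi`: it lies in no essential subset
(equivalently, outside the maximal essential subset). -/
def Superfluous (H : TriSys α) (Rfam : Finset (Finset α)) (Wi : Finset α)
    (w : α) : Prop :=
  w ∈ Wi ∧ ∀ C, EssentialSet H Rfam Wi C → w ∉ C

/-- `w` is a superfluous `W`-vertex of the FR-partition `P` (in its class). -/
def SuperfluousVert (H : TriSys α) (P : FRData α) (w : α) : Prop :=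
  ∃ i : Fin 3, Superfluous H P.Rfam (P.W ∩ H.cls i) w

/-- `v` is an essential `W`-vertex of the FR-partition `P`. -/
def EssentialVertIn (H : TriSys α) (P : FRData α) (v : α) : Prop :=
  ∃ i : Fin 3, EssentialSet H P.Rfam (P.W ∩ H.cls i) {v}

/-- `v` is essential for `R`: it is the unique neighbor of `R` in some `B_i`. -/
def EssentialForIn (H : TriSys α) (P : FRData α) (R : Finset α) (v : α) : Prop :=
  ∃ i : Fin 3, RNbhd H (P.W ∩ H.cls i) {R} = {v}

/-- The neighborhood, inside vertex class `j`, of a set `X` of class-`k`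
vertices in the link graph of `H` over the remaining vertex class. -/
def nbr (H : TriSys α) (j k : Fin 3) (X : Finset α) : Finset α :=
  (H.cls j).filter fun v => ∃ e ∈ H.edges, ecoord e j = v ∧ ecoord e k ∈ X

/-- A cromulent triple `(Y1, Y2, X)` with `Y1 ⊆ V_i`, `Y2 ⊆ V_j`, `X ⊆ V_k`. -/
def IsCromulent (H : TriSys α) (i j k : Fin 3) (Y1 Y2 X : Finset α) : Prop :=
  i ≠ j ∧ i ≠ k ∧ j ≠ k ∧
  Y1.Nonempty ∧ Y2.Nonempty ∧ X.Nonempty ∧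
  Y1 ⊆ H.cls i ∧ Y2 ⊆ H.cls j ∧ X ⊆ H.cls k ∧
  Y1.card = Y2.card ∧ Y1.card ≤ X.card ∧
  nbr H j k X = Y2 ∧
  (∃ M : Finset (α × α × α), H.IsMatching M ∧ M.card = Y1.card ∧
    ∀ e ∈ M, evset e ⊆ Y1 ∪ Y2 ∪ X) ∧
  IsHomeBase (H.delete (Y1 ∪ Y2 ∪ X)) ∧
  (H.delete (Y1 ∪ Y2 ∪ X)).nu + Y1.card = H.nu ∧
  ∀ P : FRData α, IsHomeBasePartition (H.delete (Y1 ∪ Y2 ∪ X)) P →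
    nbr H i k X ⊆ Y1 ∪ famUnion P.Rfam ∪ famUnion P.Ffam

/-- A perfectly cromulent triple: condition (5) is strengthened to
`N_{Lk_{V_j}}(X) = Y1`. -/
def IsPerfCromulent (H : TriSys α) (i j k : Fin 3) (Y1 Y2 X : Finset α) : Prop :=
  i ≠ j ∧ i ≠ k ∧ j ≠ k ∧
  Y1.Nonempty ∧ Y2.Nonempty ∧ X.Nonempty ∧
  Y1 ⊆ H.cls i ∧ Y2 ⊆ H.cls j ∧ X ⊆ H.cls k ∧
  Y1.card = Y2.card ∧ Y1.card ≤ X.card ∧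
  nbr H j k X = Y2 ∧
  (∃ M : Finset (α × α × α), H.IsMatching M ∧ M.card = Y1.card ∧
    ∀ e ∈ M, evset e ⊆ Y1 ∪ Y2 ∪ X) ∧
  IsHomeBase (H.delete (Y1 ∪ Y2 ∪ X)) ∧
  (H.delete (Y1 ∪ Y2 ∪ X)).nu + Y1.card = H.nu ∧
  nbr H i k X = Y1

/-- The link graph of `H` over the class other than `j, k` has a perfect
matching, encoded as a bijection from class `j` onto class `k` realized by
edges of `H`. -/
def LinkPerfectMatching (H : TriSys α) (j k : Fin 3) : Prop :=
  ∃ f : α → α, Set.InjOn f ↑(H.cls j) ∧ (H.cls j).image f = H.cls k ∧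
    ∀ v ∈ H.cls j, ∃ e ∈ H.edges, ecoord e j = v ∧ ecoord e k = f v

/-- A proper FR-partition: no `R ∈ 𝓡` together with an edge consisting of
three `W`-vertices induces a truncated (multi-)Fano plane. -/
def IsProper (H : TriSys α) (P : FRData α) : Prop :=
  ¬ ∃ R ∈ P.Rfam, ∃ e ∈ H.edges, evset e ⊆ P.W ∧ IsMultiFano H (R ∪ evset e)

/-! Ryser's bound gives `τ ≤ 2ν`. Conversely, the members `F ∈ 𝓕` and the sets
`R ∪ {w₁, w₂, w₃}`, where `wᵢ` is the partner of `R ∈ 𝓡` in a saturating matching of `Bᵢ`,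
are `|𝓕| + |𝓡| = ν` pairwise disjoint vertex sets. Each of them contains three edges without
a common vertex (`abc, ayz, xbz` in a truncated Fano plane; the edges joining `wᵢ` to two
vertices of `R`, which must be the two vertices of `R` outside the class of `wᵢ`), so every
vertex cover meets each of them in at least two vertices. -/

namespace TriSys

variable {H : TriSys α}

lemma mem_evset_iff {e : α × α × α} {v : α} : v ∈ evset e ↔ ∃ i, ecoord e i = v := by
  simp [evset, ecoord, Fin.exists_fin_succ, eq_comm]

lemma ecoord_mem_cls {e : α × α × α} (he : e ∈ H.edges) (i : Fin 3) : ecoord e i ∈ H.cls i := by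
  fin_cases i
  exacts [H.mem1 e he, H.mem2 e he, H.mem3 e he]

lemma eq_of_mem_cls {v : α} {i j : Fin 3} (hi : v ∈ H.cls i) (hj : v ∈ H.cls j) : i = j := by
  have h12 := Finset.disjoint_left.mp H.h12
  have h13 := Finset.disjoint_left.mp H.h13
  have h23 := Finset.disjoint_left.mp H.h23
  fin_cases i <;> fin_cases j <;> simp_all [cls]

lemma ne_of_mem_cls {u v : α} {i j : Fin 3} (hu : u ∈ H.cls i) (hv : v ∈ H.cls j)
    (hij : i ≠ j) : u ≠ v := by
  rintro rfl
  exact hij (eq_of_mem_cls hu hv)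

lemma exists_mem_cls_of_mem_evset {e : α × α × α} {v : α} (he : e ∈ H.edges)
    (hv : v ∈ evset e) : ∃ i, v ∈ H.cls i := by
  obtain ⟨i, rfl⟩ := mem_evset_iff.mp hv
  exact ⟨i, ecoord_mem_cls he i⟩

lemma eq_ecoord_of_mem_evset {e : α × α × α} {v : α} {i : Fin 3} (he : e ∈ H.edges)
    (hv : v ∈ evset e) (hvi : v ∈ H.cls i) : v = ecoord e i := by
  obtain ⟨j, rfl⟩ := mem_evset_iff.mp hv
  rw [eq_of_mem_cls (ecoord_mem_cls he j) hvi]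

lemma isCover_verts : H.IsCover H.verts := fun e he =>
  ⟨e.1, Finset.mem_union_left _ (Finset.mem_union_left _ (H.mem1 e he)), by simp [evset]⟩

lemma le_tau_of_forall_isCover {n : ℕ} (h : ∀ T, H.IsCover T → n ≤ T.card) : n ≤ H.tau :=
  le_csInf ⟨_, H.verts, isCover_verts, rfl⟩ fun _ ⟨T, hT, hTn⟩ => hTn ▸ h T hT

lemma two_le_card_inter_of_isCover {ι : Type*} [Nonempty ι] {T S : Finset α}
    (hT : H.IsCover T) (e : ι → α × α × α) (he : ∀ k, e k ∈ H.edges)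
    (heS : ∀ k, evset (e k) ⊆ S) (hcommon : ∀ v, ∃ k, v ∉ evset (e k)) :
    2 ≤ (T ∩ S).card := by
  choose c hcT hce using fun k => hT (e k) (he k)
  have hcTS : ∀ k, c k ∈ T ∩ S := fun k => Finset.mem_inter.mpr ⟨hcT k, heS k (hce k)⟩
  by_contra! hlt
  obtain ⟨k₀⟩ := ‹Nonempty ι›
  obtain ⟨k, hk⟩ := hcommon (c k₀)
  exact hk (Finset.card_le_one.mp (Nat.lt_succ_iff.mp hlt) _ (hcTS k) _ (hcTS k₀) ▸ hce k)

end TriSys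

open TriSys

lemma IsMultiFano.two_le_card_inter {H : TriSys α} {T F : Finset α} (hT : H.IsCover T)
    (hF : IsMultiFano H F) : 2 ≤ (T ∩ F).card := by
  obtain ⟨a, b, c, x, y, z, -, -, -, -, -, -, hax, hby, hcz, -, hind⟩ := hF
  have hmem : ∀ e ∈ FanoEdges a b c x y z, e ∈ H.edges ∧ evset e ⊆ F := by
    intro e he
    rw [← hind] at he
    simpa [inducedEdges] using he
  set e : Fin 3 → α × α × α := ![(a, b, c), (a, y, z), (x, b, z)]
  have he : ∀ k, e k ∈ FanoEdges a b c x y z := by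
    intro k; fin_cases k <;> simp [e, FanoEdges]
  refine two_le_card_inter_of_isCover hT e (fun k => (hmem _ (he k)).1)
    (fun k => (hmem _ (he k)).2) fun v => ?_
  by_contra! hv
  obtain ⟨i, hi⟩ := exists_mem_cls_of_mem_evset (hmem _ (he 0)).1 (hv 0)
  have hcoord := fun k => eq_ecoord_of_mem_evset (hmem _ (he k)).1 (hv k) hi
  have h0 := hcoord 0
  have h1 := hcoord 1
  have h2 := hcoord 2
  fin_cases i <;> simp_all [e, ecoord]

lemma erase_eq_inter_of_two_le_card {e : α × α × α} {R : Finset α} {w : α}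
    (hw : w ∈ evset e) (hwR : w ∉ R) (h2 : 2 ≤ (evset e ∩ R).card) :
    (evset e).erase w = evset e ∩ R := by
  refine (Finset.eq_of_subset_of_card_le (fun u hu => ?_) ?_).symm
  · obtain ⟨hue, huR⟩ := Finset.mem_inter.mp hu
    exact Finset.mem_erase.mpr ⟨fun huw => hwR (huw ▸ huR), hue⟩
  · have hcard : (evset e).card ≤ 3 := Finset.card_le_three
    rw [Finset.card_erase_of_mem hw]
    omega

lemma two_le_card_inter_union_image {H : TriSys α} {T R : Finset α} (hT : H.IsCover T)
    (w : Fin 3 → α) (hwcls : ∀ i, w i ∈ H.cls i) (hwR : ∀ i, w i ∉ R)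
    (hadj : ∀ i, RAdj H R (w i)) : 2 ≤ (T ∩ (R ∪ Finset.univ.image w)).card := by
  choose e he hwe h2 using hadj
  have herase : ∀ i, (evset (e i)).erase (w i) = evset (e i) ∩ R := fun i =>
    erase_eq_inter_of_two_le_card (hwe i) (hwR i) (h2 i)
  refine two_le_card_inter_of_isCover hT e he (fun i u hu => ?_) fun v => ?_
  · by_cases huw : u = w i
    · exact Finset.mem_union_right _ (Finset.mem_image.mpr ⟨i, Finset.mem_univ _, huw.symm⟩)
    · have hu' : u ∈ evset (e i) ∩ R := herase i ▸ Finset.mem_erase.mpr ⟨huw, hu⟩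
      exact Finset.mem_union_left _ (Finset.mem_inter.mp hu').2
  · by_contra! hv
    obtain ⟨i, hi⟩ := exists_mem_cls_of_mem_evset (he 0) (hv 0)
    have hvw : v = w i := (eq_ecoord_of_mem_evset (he i) (hv i) hi).trans
      (eq_ecoord_of_mem_evset (he i) (hwe i) (hwcls i)).symm
    have hij : i ≠ i + 1 := by fin_cases i <;> decide
    have hvR : v ∈ evset (e (i + 1)) ∩ R :=
      herase (i + 1) ▸ Finset.mem_erase.mpr ⟨ne_of_mem_cls hi (hwcls (i + 1)) hij, hv (i + 1)⟩
    exact hwR i (hvw ▸ (Finset.mem_inter.mp hvR).2)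

lemma card_mul_le_card_of_pairwiseDisjoint {ι β : Type*} {I : Finset ι} {B : ι → Finset β}
    {T : Finset β} {n : ℕ} (hB : (I : Set ι).PairwiseDisjoint B)
    (h : ∀ i ∈ I, n ≤ (T ∩ B i).card) : I.card * n ≤ T.card := by
  classical
  calc I.card * n ≤ ∑ i ∈ I, (T ∩ B i).card := by
        simpa using Finset.card_nsmul_le_sum I _ n h
    _ = (I.biUnion fun i => T ∩ B i).card :=
        (Finset.card_biUnion fun i hi j hj hij =>
          (hB hi hj hij).mono Finset.inter_subset_right Finset.inter_subset_right).symm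
    _ ≤ T.card :=
        Finset.card_le_card (Finset.biUnion_subset.mpr fun _ _ => Finset.inter_subset_left)

namespace IsFRPartition

variable {H : TriSys α} {P : FRData α}

lemma pairwiseDisjoint_blocks (hP : IsFRPartition H P) {w : Fin 3 → Finset α → α}
    (hinj : ∀ i, Set.InjOn (w i) P.Rfam) (hw : ∀ i, ∀ R ∈ P.Rfam, w i R ∈ P.W ∩ H.cls i) :
    (↑(P.Ffam.disjSum P.Rfam) : Set (Finset α ⊕ Finset α)).PairwiseDisjoint
      (Sum.elim id fun R => R ∪ Finset.univ.image (w · R)) := by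
  obtain ⟨hFF, hRR, hFR, hFW, hRW, -⟩ := hP
  have himageW : ∀ R ∈ P.Rfam, Finset.univ.image (w · R) ⊆ P.W := by
    intro R hR u hu
    obtain ⟨i, -, rfl⟩ := Finset.mem_image.mp hu
    exact (Finset.mem_inter.mp (hw i R hR)).1
  have himage : ∀ R ∈ P.Rfam, ∀ R' ∈ P.Rfam, R ≠ R' →
      Disjoint (Finset.univ.image (w · R)) (Finset.univ.image (w · R')) := by
    intro R hR R' hR' hne
    rw [Finset.disjoint_left]
    intro u hu hu'
    obtain ⟨i, -, rfl⟩ := Finset.mem_image.mp hu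
    obtain ⟨j, -, hj⟩ := Finset.mem_image.mp hu'
    have hij : j = i := eq_of_mem_cls (hj ▸ (Finset.mem_inter.mp (hw j R' hR')).2)
      (Finset.mem_inter.mp (hw i R hR)).2
    subst hij
    exact hne (hinj j hR' hR hj).symm
  have hFblock : ∀ F ∈ P.Ffam, ∀ R ∈ P.Rfam,
      Disjoint F (R ∪ Finset.univ.image (w · R)) := fun F hF R hR =>
    Finset.disjoint_union_right.mpr ⟨hFR F hF R hR, (hFW F hF).mono_right (himageW R hR)⟩
  rintro (F | R) hx (F' | R') hy hne <;>
    simp only [Finset.mem_coe, Finset.inl_mem_disjSum, Finset.inr_mem_disjSum] at hx hy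
  · exact hFF F hx F' hy fun h => hne (h ▸ rfl)
  · exact hFblock F hx R' hy
  · exact (hFblock F' hy R hx).symm
  · have hRR' : R ≠ R' := fun h => hne (h ▸ rfl)
    exact Finset.disjoint_union_left.mpr ⟨Finset.disjoint_union_right.mpr ⟨hRR R hx R' hy hRR',
      (hRW R hx).mono_right (himageW R' hy)⟩, Finset.disjoint_union_right.mpr
      ⟨((hRW R' hy).mono_right (himageW R hx)).symm, himage R hx R' hy hRR'⟩⟩

lemma two_mul_nu_le_card (hP : IsFRPartition H P) (hM : IsMatchable H P) {T : Finset α}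
    (hT : H.IsCover T) : 2 * H.nu ≤ T.card := by
  obtain ⟨-, -, -, -, hRW, -, hFano, -, hnu⟩ := id hP
  choose w hinj hw using hM
  have hblock : ∀ x ∈ P.Ffam.disjSum P.Rfam,
      2 ≤ (T ∩ Sum.elim id (fun R => R ∪ Finset.univ.image (w · R)) x).card := by
    rintro (F | R) hx
    · exact (hFano F (Finset.inl_mem_disjSum.mp hx)).two_le_card_inter hT
    · have hR := Finset.inr_mem_disjSum.mp hx
      exact two_le_card_inter_union_image hT (w · R)
        (fun i => (Finset.mem_inter.mp (hw i R hR).1).2)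
        (fun i h => Finset.disjoint_left.mp (hRW R hR) h (Finset.mem_inter.mp (hw i R hR).1).1)
        fun i => (hw i R hR).2
  calc 2 * H.nu = (P.Ffam.disjSum P.Rfam).card * 2 := by
        rw [Finset.card_disjSum, hnu, mul_comm]
    _ ≤ T.card := card_mul_le_card_of_pairwiseDisjoint
        (hP.pairwiseDisjoint_blocks hinj fun i R hR => (hw i R hR).1) hblock

end IsFRPartition

/-- If a 3-partite 3-graph `H` has a home-base partition, then
`τ(H) = 2ν(H)`.  (Ryser's Conjecture for 3-partite 3-graphs, i.e. Aharoni's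
theorem `τ ≤ 2ν`, may be assumed.) -/
theorem homeBasePartition_tau_eq_two_nu (H : TriSys α) (P : FRData α)
    (hP : IsHomeBasePartition H P)
    (hRyser : ∀ H' : TriSys α, H'.tau ≤ 2 * H'.nu) :
    H.tau = 2 * H.nu :=
  le_antisymm (hRyser H)
    (le_tau_of_forall_isCover fun _ hT => hP.1.two_mul_nu_le_card hP.2.1 hT)
end
end

section
/- Let B be a bipartite graph with parts 𝓡 and W that has a matching saturating 𝓡. Then the union of any two essential subsets of W is essential; consequently W contains a unique maximal essential subset, namely the union of all essential subsets of W. -/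
noncomputable section

attribute [local instance] Classical.propDecidable

variable {ρ ω : Type*}

/-- The neighborhood of a set `U` of left vertices in the bipartite graph
with edge set `E`. -/
def bNbhd (E : Finset (ρ × ω)) (U : Finset ρ) : Finset ω :=
  (E.filter fun p => p.1 ∈ U).image Prod.snd

/-- `C` is an essential subset of the right side: `C = N(U)` for some
`U ⊆ Rset` with `|U| = |C|`. -/
def bEssential (Rset : Finset ρ) (E : Finset (ρ × ω)) (C : Finset ω) : Prop :=
  ∃ U ⊆ Rset, U.card = C.card ∧ bNbhd E U = C

/-- The bipartite graph with edge set `E` has a matching saturating `Rset`. -/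
def SaturatesR (Rset : Finset ρ) (E : Finset (ρ × ω)) : Prop :=
  ∃ f : ρ → ω, Set.InjOn f ↑Rset ∧ ∀ r ∈ Rset, (r, f r) ∈ E

/-!
With a matching saturating `𝓡`, Hall's inequality `|U| ≤ |N(U)|` holds for every `U ⊆ 𝓡`, and
essential sets are exactly the neighbourhoods where it is tight. Since `N` preserves unions and
`N(U₁ ∩ U₂) ⊆ N(U₁) ∩ N(U₂)`, tightness at `U₁` and `U₂` forces tightness at `U₁ ∪ U₂` by
inclusion–exclusion. Essential sets all lie in the finite set of right endpoints of edges, so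
their union is a finite union, hence essential, and it is the greatest essential set.
-/

section Neighborhood

variable (E : Finset (ρ × ω))

@[simp]
lemma mem_bNbhd {U : Finset ρ} {w : ω} : w ∈ bNbhd E U ↔ ∃ r ∈ U, (r, w) ∈ E := by
  simp only [bNbhd, Finset.mem_image, Finset.mem_filter, Prod.exists]
  grind

@[simp]
lemma bNbhd_empty : bNbhd E (∅ : Finset ρ) = ∅ := by
  simp [bNbhd]

lemma bNbhd_union (U V : Finset ρ) : bNbhd E (U ∪ V) = bNbhd E U ∪ bNbhd E V := by
  ext w
  simp only [mem_bNbhd, Finset.mem_union]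
  grind

lemma bNbhd_mono {U V : Finset ρ} (h : U ⊆ V) : bNbhd E U ⊆ bNbhd E V := by
  intro w
  simp only [mem_bNbhd]
  exact fun ⟨r, hr, hrw⟩ => ⟨r, h hr, hrw⟩

lemma bNbhd_inter_subset (U V : Finset ρ) : bNbhd E (U ∩ V) ⊆ bNbhd E U ∩ bNbhd E V :=
  Finset.subset_inter (bNbhd_mono E Finset.inter_subset_left)
    (bNbhd_mono E Finset.inter_subset_right)

lemma bNbhd_subset_image_snd (U : Finset ρ) : bNbhd E U ⊆ E.image Prod.snd :=
  Finset.image_subset_image (Finset.filter_subset _ _)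

end Neighborhood

lemma SaturatesR.card_le_card_bNbhd {Rset : Finset ρ} {E : Finset (ρ × ω)}
    (hsat : SaturatesR Rset E) {U : Finset ρ} (hU : U ⊆ Rset) :
    U.card ≤ (bNbhd E U).card := by
  obtain ⟨f, hinj, hf⟩ := hsat
  refine Finset.card_le_card_of_injOn f (fun r hr => ?_) (hinj.mono (by exact_mod_cast hU))
  exact (mem_bNbhd E).2 ⟨r, hr, hf r (hU hr)⟩

section Essential

variable {Rset : Finset ρ} {E : Finset (ρ × ω)}

lemma bEssential_empty : bEssential Rset E ∅ :=
  ⟨∅, Finset.empty_subset _, rfl, bNbhd_empty E⟩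

lemma bEssential.subset_image_snd {C : Finset ω} (hC : bEssential Rset E C) :
    C ⊆ E.image Prod.snd := by
  obtain ⟨U, -, -, rfl⟩ := hC
  exact bNbhd_subset_image_snd E U

lemma bEssential.union (hsat : SaturatesR Rset E) {C₁ C₂ : Finset ω}
    (h₁ : bEssential Rset E C₁) (h₂ : bEssential Rset E C₂) : bEssential Rset E (C₁ ∪ C₂) := by
  obtain ⟨U₁, hU₁, hcard₁, rfl⟩ := h₁
  obtain ⟨U₂, hU₂, hcard₂, rfl⟩ := h₂
  have hU : U₁ ∪ U₂ ⊆ Rset := Finset.union_subset hU₁ hU₂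
  refine ⟨U₁ ∪ U₂, hU, ?_, bNbhd_union E U₁ U₂⟩
  have hall_union : (U₁ ∪ U₂).card ≤ (bNbhd E U₁ ∪ bNbhd E U₂).card :=
    bNbhd_union E U₁ U₂ ▸ hsat.card_le_card_bNbhd hU
  have hall_inter : (U₁ ∩ U₂).card ≤ (bNbhd E U₁ ∩ bNbhd E U₂).card :=
    (hsat.card_le_card_bNbhd (Finset.inter_subset_left.trans hU₁)).trans
      (Finset.card_le_card (bNbhd_inter_subset E U₁ U₂))
  have := Finset.card_union_add_card_inter U₁ U₂
  have := Finset.card_union_add_card_inter (bNbhd E U₁) (bNbhd E U₂)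
  omega

def maxEssential (Rset : Finset ρ) (E : Finset (ρ × ω)) : Finset ω :=
  ((E.image Prod.snd).powerset.filter (bEssential Rset E)).sup id

lemma isGreatest_maxEssential (hsat : SaturatesR Rset E) :
    IsGreatest {C | bEssential Rset E C} (maxEssential Rset E) := by
  refine ⟨Finset.sup_induction bEssential_empty (fun _ h₁ _ h₂ => h₁.union hsat h₂)
    fun C hC => (Finset.mem_filter.1 hC).2, fun C hC => ?_⟩
  exact Finset.le_sup (f := id)
    (Finset.mem_filter.2 ⟨Finset.mem_powerset.2 (bEssential.subset_image_snd hC), hC⟩)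

end Essential

theorem union_essential_and_unique_maximal_general
    (Rset : Finset ρ) (E : Finset (ρ × ω))
    (hsat : SaturatesR Rset E) :
    (∀ C1 C2 : Finset ω, bEssential Rset E C1 → bEssential Rset E C2 →
      bEssential Rset E (C1 ∪ C2)) ∧
    (∃! Cm : Finset ω, bEssential Rset E Cm ∧
      ∀ C, bEssential Rset E C → C ⊆ Cm) ∧
    (∀ Cm : Finset ω,
      (bEssential Rset E Cm ∧ ∀ C, bEssential Rset E C → C ⊆ Cm) →
      ∀ w, w ∈ Cm ↔ ∃ C, bEssential Rset E C ∧ w ∈ C) := by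
  refine ⟨fun _ _ h₁ h₂ => h₁.union hsat h₂,
    ⟨maxEssential Rset E, isGreatest_maxEssential hsat,
      fun _ hCm => IsGreatest.unique (s := {C | bEssential Rset E C}) hCm
        (isGreatest_maxEssential hsat)⟩, ?_⟩
  rintro Cm ⟨hCm, hmax⟩ w
  exact ⟨fun hw => ⟨Cm, hCm, hw⟩, fun ⟨C, hC, hwC⟩ => hmax C hC hwC⟩

/-- In a bipartite graph with parts `Rset` and `Wset` having a matching
saturating `Rset`, the union of two essential subsets of `Wset` is essential;
consequently there is a unique maximal essential subset, namely the union of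
all essential subsets. -/
theorem union_essential_and_unique_maximal
    (Rset : Finset ρ) (Wset : Finset ω) (E : Finset (ρ × ω))
    (hE : ∀ p ∈ E, p.1 ∈ Rset ∧ p.2 ∈ Wset)
    (hsat : SaturatesR Rset E) :
    (∀ C1 C2 : Finset ω, bEssential Rset E C1 → bEssential Rset E C2 →
      bEssential Rset E (C1 ∪ C2)) ∧
    (∃! Cm : Finset ω, bEssential Rset E Cm ∧
      ∀ C, bEssential Rset E C → C ⊆ Cm) ∧
    (∀ Cm : Finset ω,
      (bEssential Rset E Cm ∧ ∀ C, bEssential Rset E C → C ⊆ Cm) →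
      ∀ w, w ∈ Cm ↔ ∃ C, bEssential Rset E C ∧ w ∈ C) :=
  union_essential_and_unique_maximal_general Rset E hsat
end
end

section
/- Let H be a 3-partite 3-graph with a matchable FR-partition (𝓕, 𝓡, W), and let S ⊆ W be a set of superfluous vertices containing at most one vertex from each vertex class. Then (𝓕, 𝓡, W \ S) is a matchable FR-partition of the hypergraph H − S obtained by deleting the vertices of S (in particular, ν(H − S) = ν(H)). -/
noncomputable section

attribute [local instance] Classical.propDecidable

universe u

variable {α : Type u}

/-!
Deleting a superfluous vertex `s` of `W ∩ V_i` preserves Hall's condition in `B_i`: if `s`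
lies in the neighbourhood `N(U)` of a set `U` of `R`'s, then `|N(U)| > |U|`, for otherwise
`N(U)` would be an essential set containing `s`. An edge joining `w` to `R` lies inside
`R ∪ {w}`, which avoids `S`, so the saturating matchings of the `B_i` survive in `H − S`.
Finally the `F`-sets and the sets `R ∪ {f R}`, for `f` a saturating matching of `B_1`, are
pairwise disjoint and each contains an edge of `H − S`; this gives a matching of size
`|𝓕| + |𝓡| = ν(H) ≥ ν(H − S)`.
-/

open Finset

namespace TriSys

lemma card_evset (H : TriSys α) {e : α × α × α} (he : e ∈ H.edges) : (evset e).card = 3 :=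
  card_eq_three.mpr ⟨e.1, e.2.1, e.2.2,
    fun h => disjoint_left.mp H.h12 (H.mem1 e he) (h ▸ H.mem2 e he),
    fun h => disjoint_left.mp H.h13 (H.mem1 e he) (h ▸ H.mem3 e he),
    fun h => disjoint_left.mp H.h23 (H.mem2 e he) (h ▸ H.mem3 e he), rfl⟩

lemma disjoint_cls (H : TriSys α) {i j : Fin 3} (hij : i ≠ j) :
    Disjoint (H.cls i) (H.cls j) := by
  fin_cases i <;> fin_cases j <;> simp_all [cls] <;>
    first
      | exact H.h12 | exact H.h13 | exact H.h23
      | exact H.h12.symm | exact H.h13.symm | exact H.h23.symm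

lemma card_le_nu (H : TriSys α) {M : Finset (α × α × α)} (hM : H.IsMatching M) :
    M.card ≤ H.nu :=
  le_csSup ⟨H.edges.toFinset.card, by
    rintro _ ⟨M, hM, rfl⟩
    exact card_le_card fun e he => Multiset.mem_toFinset.mpr (hM.1 e he)⟩ ⟨M, hM, rfl⟩

lemma card_le_nu_of_pairwiseDisjoint {ι : Type*} (H : TriSys α) (s : Finset ι)
    (X : ι → Finset α) (hX : (s : Set ι).PairwiseDisjoint X)
    (hE : ∀ i ∈ s, ∃ e ∈ H.edges, evset e ⊆ X i) : s.card ≤ H.nu := by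
  rcases s.eq_empty_or_nonempty with rfl | ⟨i₀, hi₀⟩
  · simp
  have : Nonempty (α × α × α) := ⟨(hE i₀ hi₀).choose⟩
  choose! e he hsub using hE
  have hfst : ∀ i ∈ s, (e i).1 ∈ X i := fun i hi => hsub i hi (by simp [evset])
  have hinj : Set.InjOn e s := fun i hi j hj hij =>
    hX.elim hi hj (not_disjoint_iff.mpr ⟨(e i).1, hfst i hi, hij ▸ hfst j hj⟩)
  rw [← card_image_of_injOn hinj]
  refine H.card_le_nu ⟨fun f hf => ?_, ?_⟩
  · obtain ⟨i, hi, rfl⟩ := mem_image.mp hf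
    exact he i hi
  · rintro _ hf _ hf' hne
    obtain ⟨i, hi, rfl⟩ := mem_image.mp hf
    obtain ⟨j, hj, rfl⟩ := mem_image.mp hf'
    exact (hX hi hj fun hij => hne (hij ▸ rfl)).mono (hsub i hi) (hsub j hj)

lemma mem_delete_edges {H : TriSys α} {S : Finset α} {e : α × α × α} :
    e ∈ (H.delete S).edges ↔ e ∈ H.edges ∧ Disjoint (evset e) S := by
  simp [delete, evset]

lemma nu_delete_le (H : TriSys α) (S : Finset α) : (H.delete S).nu ≤ H.nu :=
  csSup_le ⟨0, ∅, ⟨by simp, by simp⟩, rfl⟩ <| by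
    rintro _ ⟨M, hM, rfl⟩
    exact H.card_le_nu ⟨fun e he => (mem_delete_edges.mp (hM.1 e he)).1, hM.2⟩

lemma cls_delete (H : TriSys α) (S : Finset α) (i : Fin 3) :
    (H.delete S).cls i = H.cls i \ S := by
  fin_cases i <;> rfl

lemma verts_delete (H : TriSys α) (S : Finset α) : (H.delete S).verts = H.verts \ S := by
  ext v
  simp only [verts, delete, mem_union, mem_sdiff]
  tauto

end TriSys

lemma inducedEdges_delete {H : TriSys α} {S A : Finset α} (hAS : Disjoint A S) :
    inducedEdges (H.delete S) A = inducedEdges H A := by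
  ext e
  simp only [inducedEdges, Multiset.mem_toFinset, Multiset.mem_filter,
    TriSys.mem_delete_edges]
  exact ⟨fun ⟨⟨he, _⟩, hsub⟩ => ⟨he, hsub⟩,
    fun ⟨he, hsub⟩ => ⟨⟨he, hAS.mono_left hsub⟩, hsub⟩⟩

lemma IsMultiFano.delete {H : TriSys α} {S A : Finset α} (h : IsMultiFano H A)
    (hAS : Disjoint A S) : IsMultiFano (H.delete S) A := by
  obtain ⟨a, b, c, x, y, z, ha, hx, hb, hy, hc, hz, hax, hby, hcz, rfl, hind⟩ := h
  have hS : ∀ v ∈ ({a, b, c, x, y, z} : Finset α), v ∉ S := fun v hv =>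
    disjoint_left.mp hAS hv
  refine ⟨a, b, c, x, y, z, ?_, ?_, ?_, ?_, ?_, ?_, hax, hby, hcz, rfl,
    (inducedEdges_delete hAS).trans hind⟩ <;>
    exact mem_sdiff.mpr ⟨‹_›, hS _ (by simp)⟩

lemma IsMultiFano.exists_edge_subset {H : TriSys α} {A : Finset α} (h : IsMultiFano H A) :
    ∃ e ∈ H.edges, evset e ⊆ A := by
  obtain ⟨a, b, c, x, y, z, -, -, -, -, -, -, -, -, -, -, hind⟩ := h
  have habc : (a, b, c) ∈ inducedEdges H A := by simp [hind, FanoEdges]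
  simp only [inducedEdges, Multiset.mem_toFinset, Multiset.mem_filter] at habc
  exact ⟨_, habc⟩

lemma evset_subset_insert {H : TriSys α} {R : Finset α} {w : α} {e : α × α × α}
    (he : e ∈ H.edges) (hwe : w ∈ evset e) (hwR : w ∉ R) (h2 : 2 ≤ (evset e ∩ R).card) :
    evset e ⊆ insert w R := by
  intro v hv
  by_cases hvR : v ∈ R
  · exact mem_insert_of_mem hvR
  have hout : (evset e \ R).card ≤ 1 := by
    have := card_sdiff_add_card_inter (evset e) R
    rw [H.card_evset he] at this
    omega
  rw [card_le_one.mp hout v (mem_sdiff.mpr ⟨hv, hvR⟩) w (mem_sdiff.mpr ⟨hwe, hwR⟩)]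
  exact mem_insert_self w R

lemma RAdj.delete {H : TriSys α} {S R : Finset α} {w : α} (h : RAdj H R w) (hwS : w ∉ S)
    (hwR : w ∉ R) (hRS : Disjoint R S) : RAdj (H.delete S) R w := by
  obtain ⟨e, he, hwe, h2⟩ := h
  have hdisj : Disjoint (insert w R) S := disjoint_insert_left.mpr ⟨hwS, hRS⟩
  have hsub := evset_subset_insert he hwe hwR h2
  exact ⟨e, TriSys.mem_delete_edges.mpr ⟨he, hdisj.mono_left hsub⟩, hwe, h2⟩

section Hall

variable {H : TriSys α} {Rf : Finset (Finset α)} {Wi : Finset α}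

lemma SaturatingR.card_le_card_rNbhd (h : SaturatingR H Rf Wi) {U : Finset (Finset α)}
    (hU : U ⊆ Rf) : U.card ≤ (RNbhd H Wi U).card := by
  obtain ⟨f, hinj, hf⟩ := h
  rw [← card_image_of_injOn (hinj.mono (coe_subset.mpr hU))]
  refine card_le_card fun w hw => ?_
  obtain ⟨R, hR, rfl⟩ := mem_image.mp hw
  exact mem_filter.mpr ⟨(hf R (hU hR)).1, R, hR, (hf R (hU hR)).2⟩

lemma saturatingR_of_card_le_card_rNbhd [Nonempty α]
    (h : ∀ U ⊆ Rf, U.card ≤ (RNbhd H Wi U).card) : SaturatingR H Rf Wi := by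
  let t : Rf → Finset α := fun R => Wi.filter (RAdj H R)
  have hall : ∀ s : Finset Rf, s.card ≤ (s.biUnion t).card := fun s => by
    have hN : s.biUnion t = RNbhd H Wi (s.map (Function.Embedding.subtype _)) := by
      ext w
      simp only [t, RNbhd, mem_biUnion, mem_filter, mem_map, Function.Embedding.coe_subtype]
      constructor
      · rintro ⟨R, hR, hw, hadj⟩
        exact ⟨hw, R, ⟨R, hR, rfl⟩, hadj⟩
      · rintro ⟨hw, _, ⟨R, hR, rfl⟩, hadj⟩
        exact ⟨R, hR, hw, hadj⟩
    rw [hN, ← card_map (Function.Embedding.subtype _)]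
    exact h _ fun R hR => by
      obtain ⟨R', -, rfl⟩ := mem_map.mp hR
      exact R'.2
  obtain ⟨f, hinj, hf⟩ := (all_card_le_biUnion_card_iff_exists_injective t).mp hall
  refine ⟨fun R => if hR : R ∈ Rf then f ⟨R, hR⟩ else Classical.arbitrary α, ?_, ?_⟩
  · intro A hA B hB hAB
    simp only [mem_coe] at hA hB
    exact congrArg Subtype.val (hinj (by simpa [hA, hB] using hAB))
  · intro R hR
    simpa [hR, t] using hf ⟨R, hR⟩

lemma SaturatingR.sdiff (h : SaturatingR H Rf Wi) {T : Finset α} (hT : T.card ≤ 1)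
    (hsup : ∀ t ∈ T, Superfluous H Rf Wi t) : SaturatingR H Rf (Wi \ T) := by
  have : Nonempty α := let ⟨f, _⟩ := h; ⟨f ∅⟩
  refine saturatingR_of_card_le_card_rNbhd fun U hU => ?_
  have hN : RNbhd H (Wi \ T) U = RNbhd H Wi U \ T := by
    ext w
    simp only [RNbhd, mem_filter, mem_sdiff]
    tauto
  rw [hN]
  by_cases hdisj : Disjoint (RNbhd H Wi U) T
  · rw [sdiff_eq_self_of_disjoint hdisj]
    exact h.card_le_card_rNbhd hU
  obtain ⟨t, htN, htT⟩ := not_disjoint_iff.mp hdisj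
  have hlt : U.card < (RNbhd H Wi U).card := (h.card_le_card_rNbhd hU).lt_of_ne
    fun heq => (hsup t htT).2 _ ⟨U, hU, heq, rfl⟩ htN
  have := le_card_sdiff T (RNbhd H Wi U)
  omega

lemma SaturatingR.delete (h : SaturatingR H Rf Wi) {S : Finset α}
    (hRS : ∀ R ∈ Rf, Disjoint R S) (hRW : ∀ R ∈ Rf, Disjoint R Wi) (hWS : Disjoint Wi S) :
    SaturatingR (H.delete S) Rf Wi := by
  obtain ⟨f, hinj, hf⟩ := h
  refine ⟨f, hinj, fun R hR => ⟨(hf R hR).1, (hf R hR).2.delete ?_ ?_ (hRS R hR)⟩⟩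
  · exact disjoint_left.mp hWS (hf R hR).1
  · exact disjoint_right.mp (hRW R hR) (hf R hR).1

lemma SaturatingR.mono (h : SaturatingR H Rf Wi) {Wi' : Finset α} (hW : Wi ⊆ Wi') :
    SaturatingR H Rf Wi' :=
  let ⟨f, hinj, hf⟩ := h
  ⟨f, hinj, fun R hR => ⟨hW (hf R hR).1, (hf R hR).2⟩⟩

end Hall

lemma IsMatchable.delete {H : TriSys α} {P : FRData α} (hM : IsMatchable H P)
    (hRW : ∀ R ∈ P.Rfam, Disjoint R P.W) {S : Finset α} (hSW : S ⊆ P.W)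
    (hSsup : ∀ s ∈ S, SuperfluousVert H P s) (hSone : ∀ i : Fin 3, (S ∩ H.cls i).card ≤ 1) :
    IsMatchable (H.delete S) ⟨P.Ffam, P.Rfam, P.W \ S⟩ := by
  intro i
  have hsup : ∀ s ∈ S ∩ H.cls i, Superfluous H P.Rfam (P.W ∩ H.cls i) s := by
    intro s hs
    obtain ⟨j, hj⟩ := hSsup s (mem_inter.mp hs).1
    obtain rfl : j = i := by
      by_contra hji
      exact disjoint_left.mp (H.disjoint_cls hji) (mem_inter.mp hj.1).2 (mem_inter.mp hs).2
    exact hj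
  have hWi : (P.W \ S) ∩ (H.delete S).cls i = (P.W ∩ H.cls i) \ (S ∩ H.cls i) := by
    ext v
    simp only [TriSys.cls_delete, mem_inter, mem_sdiff]
    tauto
  show SaturatingR _ _ ((P.W \ S) ∩ (H.delete S).cls i)
  rw [hWi]
  refine ((hM i).sdiff (hSone i) hsup).delete (fun R hR => (hRW R hR).mono_right hSW)
    (fun R hR => (hRW R hR).mono_right ?_) ?_
  · exact sdiff_subset.trans inter_subset_left
  · rw [← hWi]
    exact disjoint_sdiff_self_left.mono_left inter_subset_left

lemma card_add_card_le_nu (H : TriSys α) (P : FRData α)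
    (hFF : ∀ A ∈ P.Ffam, ∀ B ∈ P.Ffam, A ≠ B → Disjoint A B)
    (hRR : ∀ A ∈ P.Rfam, ∀ B ∈ P.Rfam, A ≠ B → Disjoint A B)
    (hFR : ∀ A ∈ P.Ffam, ∀ B ∈ P.Rfam, Disjoint A B)
    (hFW : ∀ A ∈ P.Ffam, Disjoint A P.W) (hRW : ∀ B ∈ P.Rfam, Disjoint B P.W)
    (hF : ∀ A ∈ P.Ffam, ∃ e ∈ H.edges, evset e ⊆ A) (hR : SaturatingR H P.Rfam P.W) :
    P.Ffam.card + P.Rfam.card ≤ H.nu := by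
  obtain ⟨f, hfinj, hf⟩ := hR
  have hfR : ∀ R ∈ P.Rfam, ∀ R' ∈ P.Rfam, f R ∉ R' := fun R hR R' hR' =>
    disjoint_right.mp (hRW R' hR') (hf R hR).1
  have hFblock : ∀ A ∈ P.Ffam, ∀ R ∈ P.Rfam, Disjoint A (insert (f R) R) := fun A hA R hR =>
    disjoint_insert_right.mpr ⟨disjoint_right.mp (hFW A hA) (hf R hR).1, hFR A hA R hR⟩
  rw [← card_disjSum]
  refine H.card_le_nu_of_pairwiseDisjoint _ (Sum.elim id fun R => insert (f R) R) ?_ ?_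
  · rintro (A | R) hA (B | R') hB hne <;>
      simp only [mem_coe, inl_mem_disjSum, inr_mem_disjSum] at hA hB
    · exact hFF A hA B hB fun h => hne (h ▸ rfl)
    · exact hFblock A hA R' hB
    · exact (hFblock B hB R hA).symm
    · have hRR' : R ≠ R' := fun h => hne (h ▸ rfl)
      refine disjoint_insert_left.mpr ⟨?_, disjoint_insert_right.mpr
        ⟨hfR R' hB R hA, hRR R hA R' hB hRR'⟩⟩
      simp only [Sum.elim_inr, mem_insert, not_or]
      exact ⟨fun h => hRR' (hfinj hA hB h), hfR R hA R' hB⟩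
  · rintro (A | R) h <;> simp only [inl_mem_disjSum, inr_mem_disjSum] at h
    · exact hF A h
    · obtain ⟨e, he, hwe, h2⟩ := (hf R h).2
      exact ⟨e, he, evset_subset_insert he hwe (hfR R h R h) h2⟩

section Deletion

variable {H : TriSys α} {P : FRData α} {S : Finset α}

lemma nu_delete_eq (hFR : IsFRPartition H P) (hSW : S ⊆ P.W)
    (hM : IsMatchable (H.delete S) ⟨P.Ffam, P.Rfam, P.W \ S⟩) : (H.delete S).nu = H.nu := by
  obtain ⟨hFF, hRR, hFR, hFW, hRW, -, hFano, -, hcard⟩ := hFR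
  refine le_antisymm (H.nu_delete_le S) (hcard ▸ card_add_card_le_nu _ P hFF hRR hFR hFW hRW
    (fun A hA => ((hFano A hA).delete ((hFW A hA).mono_right hSW)).exists_edge_subset) ?_)
  exact (hM 0).mono (inter_subset_left.trans sdiff_subset)

lemma isFRPartition_delete (hFR : IsFRPartition H P) (hSW : S ⊆ P.W)
    (hnu : (H.delete S).nu = H.nu) :
    IsFRPartition (H.delete S) ⟨P.Ffam, P.Rfam, P.W \ S⟩ := by
  obtain ⟨hFF, hRR, hFR, hFW, hRW, hunion, hFano, hRtriple, hcard⟩ := hFR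
  have hFS : ∀ A ∈ P.Ffam, Disjoint A S := fun A hA => (hFW A hA).mono_right hSW
  have hRS : ∀ B ∈ P.Rfam, Disjoint B S := fun B hB => (hRW B hB).mono_right hSW
  refine ⟨hFF, hRR, hFR, fun A hA => (hFW A hA).mono_right sdiff_subset,
    fun B hB => (hRW B hB).mono_right sdiff_subset, ?_, fun A hA => (hFano A hA).delete (hFS A hA),
    ?_, hcard.trans hnu.symm⟩
  · have hFS' : Disjoint (famUnion P.Ffam) S := (disjoint_biUnion_left _ _ _).mpr hFS
    have hRS' : Disjoint (famUnion P.Rfam) S := (disjoint_biUnion_left _ _ _).mpr hRS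
    rw [TriSys.verts_delete, ← hunion, union_sdiff_distrib, union_sdiff_distrib,
      sdiff_eq_self_of_disjoint hFS', sdiff_eq_self_of_disjoint hRS']
  · intro B hB
    obtain ⟨r1, h1, r2, h2, r3, h3, rfl⟩ := hRtriple B hB
    have hS : ∀ v ∈ ({r1, r2, r3} : Finset α), v ∉ S := fun v hv =>
      disjoint_left.mp (hRS _ hB) hv
    exact ⟨r1, mem_sdiff.mpr ⟨h1, hS r1 (by simp)⟩, r2, mem_sdiff.mpr ⟨h2, hS r2 (by simp)⟩,
      r3, mem_sdiff.mpr ⟨h3, hS r3 (by simp)⟩, rfl⟩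

end Deletion

/-- Removing a set `S` of superfluous vertices, at most one from each vertex
class, from a matchable FR-partition `(𝓕, 𝓡, W)` yields a matchable
FR-partition `(𝓕, 𝓡, W \ S)` of `H − S`; in particular `ν(H − S) = ν(H)`. -/
theorem remove_superfluous_matchable (H : TriSys α) (P : FRData α)
    (hFR : IsFRPartition H P) (hM : IsMatchable H P)
    (S : Finset α) (hSW : S ⊆ P.W)
    (hSsup : ∀ s ∈ S, SuperfluousVert H P s)
    (hSone : ∀ i : Fin 3, (S ∩ H.cls i).card ≤ 1) :
    IsFRPartition (H.delete S) ⟨P.Ffam, P.Rfam, P.W \ S⟩ ∧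
    IsMatchable (H.delete S) ⟨P.Ffam, P.Rfam, P.W \ S⟩ ∧
    (H.delete S).nu = H.nu := by
  have hRW : ∀ R ∈ P.Rfam, Disjoint R P.W := hFR.2.2.2.2.1
  have hM' := hM.delete hRW hSW hSsup hSone
  have hnu := nu_delete_eq hFR hSW hM'
  exact ⟨isFRPartition_delete hFR hSW hnu, hM', hnu⟩
end
end
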